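/- arXiv:2507.19531 — 2 statements merged into one kernel-verified Lean document; each statement's English description precedes it below -/
import Mathlib

section
/- Let P be a symmetric positive semidefinite m×m matrix satisfying the discrete algebraic Riccati equation P = AᵀPA + Q − AᵀPB(BᵀPB + R)⁻¹BᵀPA, and let K = −(R + BᵀPB)⁻¹BᵀPA. Then for every x ∈ ℝ^m and every u ∈ ℝ^n, xᵀQx + uᵀRu + (Ax + Bu)ᵀP(Ax + Bu) ≥ xᵀPx, with equality if and only if u = Kx. -/
/-!
Writing `S = R + BᵀPB` and `w = BᵀPAx`, the left-hand side expands (using `Pᵀ = P`) to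
`xᵀ(Q + AᵀPA)x + uᵀSu + 2uᵀw`, while the Riccati equation reads
`xᵀPx = xᵀ(Q + AᵀPA)x - wᵀS⁻¹w`. Completing the square in `u` turns the difference into
`(u + S⁻¹w)ᵀS(u + S⁻¹w) = (u - Kx)ᵀS(u - Kx)`, which is nonnegative and vanishes exactly when
`u = Kx` because `S` is positive definite.
-/

open Matrix

namespace Matrix

variable {ι κ ν α : Type*}

theorem IsHermitian.isSymm [Star α] [TrivialStar α] {S : Matrix ι ι α} (hS : S.IsHermitian) :
    S.IsSymm := by
  rwa [IsHermitian, conjTranspose_eq_transpose_of_trivial] at hS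

variable [Fintype ι] [Fintype κ] [Fintype ν]

section CommSemiring

variable [CommSemiring α]

theorem mulVec_dotProduct_mulVec (M : Matrix ι κ α) (N : Matrix ι ν α) (x : κ → α) (y : ν → α) :
    M *ᵥ x ⬝ᵥ N *ᵥ y = x ⬝ᵥ (Mᵀ * N) *ᵥ y := by
  rw [← mulVec_mulVec, dotProduct_mulVec x, vecMul_transpose]

theorem IsSymm.dotProduct_mulVec_comm {S : Matrix ι ι α} (hS : S.IsSymm) (x y : ι → α) :
    x ⬝ᵥ S *ᵥ y = y ⬝ᵥ S *ᵥ x := by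
  rw [← dotProduct_transpose_mulVec, hS.eq]

theorem IsSymm.add_dotProduct_mulVec_add {S : Matrix ι ι α} (hS : S.IsSymm) (x y : ι → α) :
    (x + y) ⬝ᵥ S *ᵥ (x + y) = x ⬝ᵥ S *ᵥ x + 2 * (x ⬝ᵥ S *ᵥ y) + y ⬝ᵥ S *ᵥ y := by
  simp only [mulVec_add, dotProduct_add, add_dotProduct]
  rw [hS.dotProduct_mulVec_comm y x]
  ring

end CommSemiring

theorem IsSymm.completing_square [CommRing α] [DecidableEq ι] {S : Matrix ι ι α} (hS : S.IsSymm)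
    (hdet : IsUnit S.det) (u w : ι → α) :
    (u + S⁻¹ *ᵥ w) ⬝ᵥ S *ᵥ (u + S⁻¹ *ᵥ w) = u ⬝ᵥ S *ᵥ u + 2 * (u ⬝ᵥ w) + w ⬝ᵥ S⁻¹ *ᵥ w := by
  have hSinv : S *ᵥ S⁻¹ *ᵥ w = w := by rw [mulVec_mulVec, mul_nonsing_inv S hdet, one_mulVec]
  rw [hS.add_dotProduct_mulVec_add, hSinv, dotProduct_comm (S⁻¹ *ᵥ w)]

theorem PosDef.dotProduct_mulVec_self_eq_zero_iff {S : Matrix ι ι ℝ} (hS : S.PosDef)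
    (v : ι → ℝ) : v ⬝ᵥ S *ᵥ v = 0 ↔ v = 0 := by
  refine ⟨fun h ↦ by_contra fun hv ↦ ?_, by rintro rfl; simp⟩
  simpa [h] using hS.dotProduct_mulVec_pos hv

end Matrix

section Riccati

variable {ι κ α : Type*} [Fintype ι] [Fintype κ] [DecidableEq κ] [CommRing α]

theorem bellman_cost_sub_value_eq_of_riccati {A Q P : Matrix ι ι α} {B : Matrix ι κ α}
    {R : Matrix κ κ α} (hP : P.IsSymm) (hR : R.IsSymm) (hdet : IsUnit (R + Bᵀ * P * B).det)
    (hRic : P = Aᵀ * P * A + Q - Aᵀ * P * B * (Bᵀ * P * B + R)⁻¹ * (Bᵀ * P * A))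
    (x : ι → α) (u : κ → α) :
    x ⬝ᵥ Q *ᵥ x + u ⬝ᵥ R *ᵥ u + (A *ᵥ x + B *ᵥ u) ⬝ᵥ P *ᵥ (A *ᵥ x + B *ᵥ u) - x ⬝ᵥ P *ᵥ x =
      (u + (R + Bᵀ * P * B)⁻¹ *ᵥ (Bᵀ * P * A) *ᵥ x) ⬝ᵥ (R + Bᵀ * P * B) *ᵥ
        (u + (R + Bᵀ * P * B)⁻¹ *ᵥ (Bᵀ * P * A) *ᵥ x) := by
  set S := R + Bᵀ * P * B with hSdef
  set w := (Bᵀ * P * A) *ᵥ x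
  have hS : S.IsSymm := hR.add (by simp [IsSymm, transpose_mul, hP.eq, Matrix.mul_assoc])
  have hnext : (A *ᵥ x + B *ᵥ u) ⬝ᵥ P *ᵥ (A *ᵥ x + B *ᵥ u) =
      x ⬝ᵥ (Aᵀ * P * A) *ᵥ x + 2 * (u ⬝ᵥ w) + u ⬝ᵥ (Bᵀ * P * B) *ᵥ u := by
    rw [hP.add_dotProduct_mulVec_add, hP.dotProduct_mulVec_comm (A *ᵥ x) (B *ᵥ u)]
    simp only [w, mulVec_mulVec, mulVec_dotProduct_mulVec, Matrix.mul_assoc]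
  have hvalue : x ⬝ᵥ P *ᵥ x = x ⬝ᵥ Q *ᵥ x + x ⬝ᵥ (Aᵀ * P * A) *ᵥ x - w ⬝ᵥ S⁻¹ *ᵥ w := by
    have hgain : Aᵀ * P * B * (Bᵀ * P * B + R)⁻¹ * (Bᵀ * P * A) =
        (Bᵀ * P * A)ᵀ * (S⁻¹ * (Bᵀ * P * A)) := by
      simp only [hSdef, add_comm R, transpose_mul, transpose_transpose, hP.eq, Matrix.mul_assoc]
    conv_lhs => rw [hRic, hgain]
    simp only [w, sub_mulVec, add_mulVec, dotProduct_add, dotProduct_sub, mulVec_mulVec,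
      mulVec_dotProduct_mulVec]
    ring
  have hSu : S *ᵥ u = R *ᵥ u + (Bᵀ * P * B) *ᵥ u := add_mulVec _ _ _
  rw [hS.completing_square hdet, hnext, hvalue, hSu, dotProduct_add]
  ring

end Riccati

theorem riccati_bellman_inequality_general {m n : ℕ}
    (A : Matrix (Fin m) (Fin m) ℝ) (B : Matrix (Fin m) (Fin n) ℝ)
    (Q : Matrix (Fin m) (Fin m) ℝ) (R : Matrix (Fin n) (Fin n) ℝ)
    (P : Matrix (Fin m) (Fin m) ℝ)
    (hR : R.PosDef) (hP : P.PosSemidef)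
    (hRic : P = Aᵀ * P * A + Q - Aᵀ * P * B * (Bᵀ * P * B + R)⁻¹ * (Bᵀ * P * A))
    (K : Matrix (Fin n) (Fin m) ℝ)
    (hK : K = -((R + Bᵀ * P * B)⁻¹ * (Bᵀ * P * A))) :
    ∀ (x : Fin m → ℝ) (u : Fin n → ℝ),
      x ⬝ᵥ Q.mulVec x + u ⬝ᵥ R.mulVec u +
          (A.mulVec x + B.mulVec u) ⬝ᵥ P.mulVec (A.mulVec x + B.mulVec u) ≥
        x ⬝ᵥ P.mulVec x ∧
      (x ⬝ᵥ Q.mulVec x + u ⬝ᵥ R.mulVec u +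
          (A.mulVec x + B.mulVec u) ⬝ᵥ P.mulVec (A.mulVec x + B.mulVec u) =
        x ⬝ᵥ P.mulVec x ↔ u = K.mulVec x) := by
  intro x u
  have hS : (R + Bᵀ * P * B).PosDef :=
    hR.add_posSemidef (by simpa using hP.conjTranspose_mul_mul_same B)
  have hgap := bellman_cost_sub_value_eq_of_riccati hP.1.isSymm hR.1.isSymm
    ((isUnit_iff_isUnit_det _).mp hS.isUnit) hRic x u
  rw [← sub_neg_eq_add u, ← neg_mulVec, mulVec_mulVec, Matrix.neg_mul, ← hK] at hgap
  have hgap_nonneg : 0 ≤ (u - K *ᵥ x) ⬝ᵥ (R + Bᵀ * P * B) *ᵥ (u - K *ᵥ x) := by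
    simpa using hS.posSemidef.dotProduct_mulVec_nonneg (u - K *ᵥ x)
  refine ⟨sub_nonneg.mp (hgap ▸ hgap_nonneg), ?_⟩
  rw [← sub_eq_zero, hgap, hS.dotProduct_mulVec_self_eq_zero_iff, sub_eq_zero]

/-- under the DARE, the one-step Bellman inequality
`xᵀQx + uᵀRu + (Ax+Bu)ᵀP(Ax+Bu) ≥ xᵀPx` holds for all `x, u`, with equality
iff `u = Kx`, where `K = -(R + BᵀPB)⁻¹ BᵀPA`. -/
theorem riccati_bellman_inequality {m n : ℕ}
    (A : Matrix (Fin m) (Fin m) ℝ) (B : Matrix (Fin m) (Fin n) ℝ)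
    (Q : Matrix (Fin m) (Fin m) ℝ) (R : Matrix (Fin n) (Fin n) ℝ)
    (P : Matrix (Fin m) (Fin m) ℝ)
    (hQ : Q.PosSemidef) (hR : R.PosDef) (hP : P.PosSemidef)
    (hRic : P = Aᵀ * P * A + Q - Aᵀ * P * B * (Bᵀ * P * B + R)⁻¹ * (Bᵀ * P * A))
    (K : Matrix (Fin n) (Fin m) ℝ)
    (hK : K = -((R + Bᵀ * P * B)⁻¹ * (Bᵀ * P * A))) :
    ∀ (x : Fin m → ℝ) (u : Fin n → ℝ),
      x ⬝ᵥ Q.mulVec x + u ⬝ᵥ R.mulVec u +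
          (A.mulVec x + B.mulVec u) ⬝ᵥ P.mulVec (A.mulVec x + B.mulVec u) ≥
        x ⬝ᵥ P.mulVec x ∧
      (x ⬝ᵥ Q.mulVec x + u ⬝ᵥ R.mulVec u +
          (A.mulVec x + B.mulVec u) ⬝ᵥ P.mulVec (A.mulVec x + B.mulVec u) =
        x ⬝ᵥ P.mulVec x ↔ u = K.mulVec x) :=
  riccati_bellman_inequality_general A B Q R P hR hP hRic K hK
end

section
/- Let P be a symmetric positive semidefinite m×m matrix satisfying the discrete algebraic Riccati equation P = AᵀPA + Q − AᵀPB(BᵀPB + R)⁻¹BᵀPA, and let K = −(R + BᵀPB)⁻¹BᵀPA. Then for every x_0 ∈ ℝ^m and every input sequence u_0, …, u_{N−1} ∈ ℝ^n with states x_{k+1} = A x_k + B u_k, the MPC cost satisfies J(x_0, u) = Σ_{k=0}^{N−1}(x_kᵀQx_k + u_kᵀRu_k) + x_NᵀPx_N ≥ x_0ᵀPx_0, and the linear-feedback sequence u_k = K x_k (i.e. x_k = (A + BK)^k x_0) achieves J(x_0, u) = x_0ᵀPx_0 exactly; hence the linear feedback sequence is optimal for the MPC cost, and in particular the optimal MPC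 law satisfies κ_MPC(x_0) = K x_0 whenever this sequence is feasible. -/
/-!
Completing the square. With `S = R + BᵀPB`, the Riccati equation and `K = -S⁻¹BᵀPA` give, for
every state `x`, input `u` and successor `x' = Ax + Bu`,
`xᵀQx + uᵀRu + x'ᵀPx' = xᵀPx + (u - Kx)ᵀS(u - Kx)`.
Summing along a trajectory telescopes the cost to
`J(x₀, u) = x₀ᵀPx₀ + ∑ₖ (uₖ - Kxₖ)ᵀS(uₖ - Kxₖ)`, which is at least `x₀ᵀPx₀` because `S` is
positive definite, with equality for the feedback inputs `uₖ = Kxₖ`.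
-/

open Matrix

namespace Matrix

variable {𝕜 ι κ ν : Type*} [CommRing 𝕜] [Fintype ι] [Fintype κ] [Fintype ν]

theorem dotProduct_transpose_mul_mul_mulVec (M : Matrix ι κ 𝕜) (P : Matrix ι ι 𝕜)
    (N : Matrix ι ν 𝕜) (x : κ → 𝕜) (y : ν → 𝕜) :
    x ⬝ᵥ (Mᵀ * P * N) *ᵥ y = M *ᵥ x ⬝ᵥ P *ᵥ (N *ᵥ y) := by
  rw [← mulVec_mulVec, ← mulVec_mulVec, dotProduct_mulVec, vecMul_transpose]

theorem IsSymm.dotProduct_mulVec_comm_s10 {P : Matrix ι ι 𝕜} (hP : P.IsSymm) (a b : ι → 𝕜) :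
    a ⬝ᵥ P *ᵥ b = b ⬝ᵥ P *ᵥ a := by
  rw [dotProduct_mulVec, ← mulVec_transpose, hP.eq, dotProduct_comm]

theorem IsSymm.add_dotProduct_mulVec_add_s10 {P : Matrix ι ι 𝕜} (hP : P.IsSymm) (a b : ι → 𝕜) :
    (a + b) ⬝ᵥ P *ᵥ (a + b) = a ⬝ᵥ P *ᵥ a + 2 * (b ⬝ᵥ P *ᵥ a) + b ⬝ᵥ P *ᵥ b := by
  rw [mulVec_add, dotProduct_add, add_dotProduct, add_dotProduct, hP.dotProduct_mulVec_comm_s10 a b]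
  ring

end Matrix

section LinearQuadratic

variable {𝕜 ι κ : Type*} [CommRing 𝕜] [Fintype ι] [Fintype κ]
  {A Q P : Matrix ι ι 𝕜} {B : Matrix ι κ 𝕜} {R : Matrix κ κ 𝕜} {K : Matrix κ ι 𝕜}

theorem closedLoop_lyapunov_of_riccati (hSK : (R + Bᵀ * P * B) * K = -(Bᵀ * P * A))
    (hRic : P = Aᵀ * P * A + Q + Aᵀ * P * B * K) :
    Q + Kᵀ * R * K + (A + B * K)ᵀ * P * (A + B * K) = P := by
  calc Q + Kᵀ * R * K + (A + B * K)ᵀ * P * (A + B * K)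
      = Aᵀ * P * A + Q + Aᵀ * P * B * K + Kᵀ * ((R + Bᵀ * P * B) * K + Bᵀ * P * A) := by
        simp only [transpose_add, transpose_mul, Matrix.add_mul, Matrix.mul_add, Matrix.mul_assoc]
        abel
    _ = P := by rw [hSK, neg_add_cancel, Matrix.mul_zero, add_zero, ← hRic]

theorem stageCost_add_nextValue_eq (hP : P.IsSymm) (hR : R.IsSymm)
    (hSK : (R + Bᵀ * P * B) * K = -(Bᵀ * P * A))
    (hLyap : Q + Kᵀ * R * K + (A + B * K)ᵀ * P * (A + B * K) = P) (x : ι → 𝕜) (u : κ → 𝕜) :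
    x ⬝ᵥ Q *ᵥ x + u ⬝ᵥ R *ᵥ u + (A *ᵥ x + B *ᵥ u) ⬝ᵥ P *ᵥ (A *ᵥ x + B *ᵥ u) =
      x ⬝ᵥ P *ᵥ x + (u - K *ᵥ x) ⬝ᵥ (R + Bᵀ * P * B) *ᵥ (u - K *ᵥ x) := by
  set v := u - K *ᵥ x
  have hu : u = K *ᵥ x + v := (add_sub_cancel _ _).symm
  have hnext : A *ᵥ x + B *ᵥ u = (A + B * K) *ᵥ x + B *ᵥ v := by
    rw [hu, mulVec_add, add_mulVec, ← mulVec_mulVec, add_assoc]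
  have hcross : R * K + Bᵀ * P * (A + B * K) = 0 := by
    rw [Matrix.mul_add, ← Matrix.mul_assoc _ B K, add_comm (Bᵀ * P * A), ← add_assoc,
      ← Matrix.add_mul, hSK, neg_add_cancel]
  have hx : x ⬝ᵥ Q *ᵥ x + K *ᵥ x ⬝ᵥ R *ᵥ (K *ᵥ x) +
      (A + B * K) *ᵥ x ⬝ᵥ P *ᵥ ((A + B * K) *ᵥ x) = x ⬝ᵥ P *ᵥ x := by
    rw [← dotProduct_transpose_mul_mul_mulVec, ← dotProduct_transpose_mul_mul_mulVec,
      ← dotProduct_add, ← dotProduct_add, ← add_mulVec, ← add_mulVec, hLyap]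
  have hxv : v ⬝ᵥ R *ᵥ (K *ᵥ x) + B *ᵥ v ⬝ᵥ P *ᵥ ((A + B * K) *ᵥ x) = 0 := by
    rw [← dotProduct_transpose_mul_mul_mulVec, mulVec_mulVec, ← dotProduct_add, ← add_mulVec,
      hcross, zero_mulVec, dotProduct_zero]
  have hv : v ⬝ᵥ (R + Bᵀ * P * B) *ᵥ v = v ⬝ᵥ R *ᵥ v + B *ᵥ v ⬝ᵥ P *ᵥ (B *ᵥ v) := by
    rw [add_mulVec, dotProduct_add, dotProduct_transpose_mul_mul_mulVec]
  rw [hnext, hu, hR.add_dotProduct_mulVec_add_s10, hP.add_dotProduct_mulVec_add_s10, hv]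
  linear_combination hx + 2 * hxv

theorem sum_stageCost_add_terminalCost_eq (hP : P.IsSymm) (hR : R.IsSymm)
    (hSK : (R + Bᵀ * P * B) * K = -(Bᵀ * P * A))
    (hLyap : Q + Kᵀ * R * K + (A + B * K)ᵀ * P * (A + B * K) = P)
    {x : ℕ → ι → 𝕜} {u : ℕ → κ → 𝕜} (hx : ∀ k, x (k + 1) = A *ᵥ x k + B *ᵥ u k) (N : ℕ) :
    ∑ k ∈ Finset.range N, (x k ⬝ᵥ Q *ᵥ x k + u k ⬝ᵥ R *ᵥ u k) + x N ⬝ᵥ P *ᵥ x N =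
      x 0 ⬝ᵥ P *ᵥ x 0 + ∑ k ∈ Finset.range N,
        (u k - K *ᵥ x k) ⬝ᵥ (R + Bᵀ * P * B) *ᵥ (u k - K *ᵥ x k) := by
  induction N with
  | zero => simp
  | succ N ih =>
    have hstep := stageCost_add_nextValue_eq hP hR hSK hLyap (x N) (u N)
    rw [← hx] at hstep
    rw [Finset.sum_range_succ, Finset.sum_range_succ]
    linear_combination ih + hstep

end LinearQuadratic

theorem linearFeedback_optimal_for_MPC_cost_general {m n : ℕ}
    (A : Matrix (Fin m) (Fin m) ℝ) (B : Matrix (Fin m) (Fin n) ℝ)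
    (Q : Matrix (Fin m) (Fin m) ℝ) (R : Matrix (Fin n) (Fin n) ℝ)
    (P : Matrix (Fin m) (Fin m) ℝ)
    (hR : R.PosDef) (hP : P.PosSemidef)
    (hRic : P = Aᵀ * P * A + Q - Aᵀ * P * B * (Bᵀ * P * B + R)⁻¹ * (Bᵀ * P * A))
    (K : Matrix (Fin n) (Fin m) ℝ)
    (hK : K = -((R + Bᵀ * P * B)⁻¹ * (Bᵀ * P * A)))
    (N : ℕ) (x0 : Fin m → ℝ) :
    (∀ (x : ℕ → Fin m → ℝ) (u : ℕ → Fin n → ℝ), x 0 = x0 →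
      (∀ k, x (k + 1) = A.mulVec (x k) + B.mulVec (u k)) →
      (∑ k ∈ Finset.range N,
          (x k ⬝ᵥ Q.mulVec (x k) + u k ⬝ᵥ R.mulVec (u k))) +
          x N ⬝ᵥ P.mulVec (x N) ≥ x0 ⬝ᵥ P.mulVec x0) ∧
    ((∑ k ∈ Finset.range N,
        (((A + B * K) ^ k).mulVec x0 ⬝ᵥ Q.mulVec (((A + B * K) ^ k).mulVec x0) +
          K.mulVec (((A + B * K) ^ k).mulVec x0) ⬝ᵥ
            R.mulVec (K.mulVec (((A + B * K) ^ k).mulVec x0)))) +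
        ((A + B * K) ^ N).mulVec x0 ⬝ᵥ P.mulVec (((A + B * K) ^ N).mulVec x0) =
      x0 ⬝ᵥ P.mulVec x0) := by
  have hS : (R + Bᵀ * P * B).PosDef :=
    hR.add_posSemidef (by simpa using hP.conjTranspose_mul_mul_same B)
  have hSK : (R + Bᵀ * P * B) * K = -(Bᵀ * P * A) := by
    rw [hK, Matrix.mul_neg, ← Matrix.mul_assoc,
      mul_nonsing_inv _ ((isUnit_iff_isUnit_det _).mp hS.isUnit), Matrix.one_mul]
  have hLyap : Q + Kᵀ * R * K + (A + B * K)ᵀ * P * (A + B * K) = P := by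
    refine closedLoop_lyapunov_of_riccati hSK ?_
    rw [hK, add_comm R, Matrix.mul_neg, ← sub_eq_add_neg, ← Matrix.mul_assoc]
    exact hRic
  have hPs : P.IsSymm := isHermitian_iff_isSymm.mp hP.isHermitian
  have hRs : R.IsSymm := isHermitian_iff_isSymm.mp hR.isHermitian
  refine ⟨fun x u hx0 hx => ?_, ?_⟩
  · rw [sum_stageCost_add_terminalCost_eq hPs hRs hSK hLyap hx, hx0, ge_iff_le]
    refine le_add_of_nonneg_right (Finset.sum_nonneg fun k _ => ?_)
    simpa using hS.posSemidef.dotProduct_mulVec_nonneg (u k - K *ᵥ x k)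
  · have hfeedback : ∀ k, (A + B * K) ^ (k + 1) *ᵥ x0 =
        A *ᵥ ((A + B * K) ^ k *ᵥ x0) + B *ᵥ (K *ᵥ ((A + B * K) ^ k *ᵥ x0)) := fun k => by
      rw [pow_succ', ← mulVec_mulVec, add_mulVec, ← mulVec_mulVec]
    simpa only [sub_self, zero_dotProduct, Finset.sum_const_zero, add_zero, pow_zero,
      one_mulVec] using sum_stageCost_add_terminalCost_eq hPs hRs hSK hLyap
        (x := fun k => (A + B * K) ^ k *ᵥ x0) (u := fun k => K *ᵥ ((A + B * K) ^ k *ᵥ x0))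
        hfeedback N

/-- under the DARE, the horizon-`N` MPC cost with terminal cost
`x_NᵀPx_N` is bounded below by `x₀ᵀPx₀` for every input sequence, and the
linear-feedback sequence `u_k = K x_k` (so `x_k = (A+BK)^k x₀`) achieves this
bound exactly; hence the linear feedback sequence is optimal for the MPC cost. -/
theorem linearFeedback_optimal_for_MPC_cost {m n : ℕ}
    (A : Matrix (Fin m) (Fin m) ℝ) (B : Matrix (Fin m) (Fin n) ℝ)
    (Q : Matrix (Fin m) (Fin m) ℝ) (R : Matrix (Fin n) (Fin n) ℝ)
    (P : Matrix (Fin m) (Fin m) ℝ)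
    (hQ : Q.PosSemidef) (hR : R.PosDef) (hP : P.PosSemidef)
    (hRic : P = Aᵀ * P * A + Q - Aᵀ * P * B * (Bᵀ * P * B + R)⁻¹ * (Bᵀ * P * A))
    (K : Matrix (Fin n) (Fin m) ℝ)
    (hK : K = -((R + Bᵀ * P * B)⁻¹ * (Bᵀ * P * A)))
    (N : ℕ) (hN : 1 ≤ N) (x0 : Fin m → ℝ) :
    (∀ (x : ℕ → Fin m → ℝ) (u : ℕ → Fin n → ℝ), x 0 = x0 →
      (∀ k, x (k + 1) = A.mulVec (x k) + B.mulVec (u k)) →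
      (∑ k ∈ Finset.range N,
          (x k ⬝ᵥ Q.mulVec (x k) + u k ⬝ᵥ R.mulVec (u k))) +
          x N ⬝ᵥ P.mulVec (x N) ≥ x0 ⬝ᵥ P.mulVec x0) ∧
    ((∑ k ∈ Finset.range N,
        (((A + B * K) ^ k).mulVec x0 ⬝ᵥ Q.mulVec (((A + B * K) ^ k).mulVec x0) +
          K.mulVec (((A + B * K) ^ k).mulVec x0) ⬝ᵥ
            R.mulVec (K.mulVec (((A + B * K) ^ k).mulVec x0)))) +
        ((A + B * K) ^ N).mulVec x0 ⬝ᵥ P.mulVec (((A + B * K) ^ N).mulVec x0) =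
      x0 ⬝ᵥ P.mulVec x0) :=
  linearFeedback_optimal_for_MPC_cost_general A B Q R P hR hP hRic K hK N x0
end
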